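/- Let d ≥ 3 and m ≥ 3 be integers and let g ≥ d be a real number. Consider the single-processor MBSP instance (P = 1) given by the DAG W(d,m) with cache capacity r = 4 and L = 0, and let s = 2m + 2d + 4 and C_0 = (2d + m + 1) + (m + 3)·g. Then there exists a valid schedule with exactly s + d − 1 non-DELETE transitions whose total cost is C_0 − (g − d) = (3d + m + 1) + (m + 2)·g; in particular, if g > d then this cost is strictly smaller than C_0. -/

import Mathlib

namespace MBSP

/-- A transition (pebbling move) of a single processor. -/
inductive Op (ν : Type) where
  | load : ν → Op ν
  | save : ν → Op ν
  | compute : ν → Op ν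
  | delete : ν → Op ν
deriving DecidableEq

/-- An MBSP instance: a DAG with compute weights `ω`, memory weights `μ`,
`P` processors, cache capacity `r`, communication cost `g` and synchronization cost `L`. -/
structure Inst (ν : Type) where
  edge : ν → ν → Prop
  ω : ν → ℝ
  μ : ν → ℝ
  P : ℕ
  r : ℝ
  g : ℝ
  L : ℝ

variable {ν : Type} [DecidableEq ν]

def isSource (I : Inst ν) (v : ν) : Prop := ¬ ∃ u, I.edge u v

def isSink (I : Inst ν) (v : ν) : Prop := ¬ ∃ u, I.edge v u

def Acyclic (I : Inst ν) : Prop := ∀ v, ¬ Relation.TransGen I.edge v v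

def opCost (I : Inst ν) : Op ν → ℝ
  | .load v => I.μ v * I.g
  | .save v => I.μ v * I.g
  | .compute v => I.ω v
  | .delete _ => 0

def applyOp (R B : Finset ν) : Op ν → Finset ν × Finset ν
  | .load v => (insert v R, B)
  | .save v => (R, insert v B)
  | .compute v => (insert v R, B)
  | .delete v => (R.erase v, B)

def opOK (I : Inst ν) (R B : Finset ν) : Op ν → Prop
  | .load v => v ∈ B
  | .save v => v ∈ R
  | .compute v => (∃ u, I.edge u v) ∧ ∀ u, I.edge u v → u ∈ R
  | .delete _ => True

/-- The memory bound for a cache content `R`. -/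
def memOK (I : Inst ν) (R : Finset ν) : Prop := ∑ v ∈ R, I.μ v ≤ I.r

/-- Run a sequence of transitions of one processor on a pair (cache, slow memory). -/
def run (R B : Finset ν) : List (Op ν) → Finset ν × Finset ν
  | [] => (R, B)
  | op :: rest => run (applyOp R B op).1 (applyOp R B op).2 rest

/-- Validity of a sequence of transitions of one processor: every precondition holds
when the transition is applied and the memory bound holds throughout. -/
def seqValid (I : Inst ν) (R B : Finset ν) : List (Op ν) → Prop
  | [] => True
  | op :: rest => opOK I R B op ∧ memOK I (applyOp R B op).1 ∧
      seqValid I (applyOp R B op).1 (applyOp R B op).2 rest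

/-- A superstep: for every processor, a compute phase (computes and deletes),
then a save phase, a delete phase and a load phase. -/
structure Superstep (ν : Type) (P : ℕ) where
  comp : Fin P → List (Op ν)
  save : Fin P → List ν
  del : Fin P → List ν
  load : Fin P → List ν

structure Config (ν : Type) (P : ℕ) where
  R : Fin P → Finset ν
  B : Finset ν

abbrev Schedule (ν : Type) (P : ℕ) := List (Superstep ν P)

variable {P : ℕ}

def compOnly (l : List (Op ν)) : Prop :=
  ∀ op ∈ l, (∃ v, op = Op.compute v) ∨ (∃ v, op = Op.delete v)

def afterComp (c : Config ν P) (S : Superstep ν P) (p : Fin P) : Finset ν :=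
  (run (c.R p) c.B (S.comp p)).1

/-- The shared slow memory after the save phases of all processors. -/
def newB (c : Config ν P) (S : Superstep ν P) : Finset ν :=
  c.B ∪ Finset.univ.biUnion (fun p => (S.save p).toFinset)

def afterDel (c : Config ν P) (S : Superstep ν P) (p : Fin P) : Finset ν :=
  (S.del p).foldl Finset.erase (afterComp c S p)

def afterLoad (c : Config ν P) (S : Superstep ν P) (p : Fin P) : Finset ν :=
  afterDel c S p ∪ (S.load p).toFinset

/-- The configuration reached after executing a superstep. -/
def stepConfig (c : Config ν P) (S : Superstep ν P) : Config ν P :=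
  ⟨fun p => afterLoad c S p, newB c S⟩

/-- Validity of a superstep at a configuration. -/
def ssValid (I : Inst ν) (c : Config ν I.P) (S : Superstep ν I.P) : Prop :=
  (∀ p, compOnly (S.comp p)) ∧
  (∀ p, seqValid I (c.R p) c.B (S.comp p)) ∧
  (∀ p, ∀ v ∈ S.save p, v ∈ afterComp c S p) ∧
  (∀ p, ∀ v ∈ S.load p, v ∈ newB c S) ∧
  (∀ p, memOK I (afterLoad c S p))

def runSched (c : Config ν P) : Schedule ν P → Config ν P
  | [] => c
  | S :: rest => runSched (stepConfig c S) rest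

def schedValidFrom (I : Inst ν) (c : Config ν I.P) : Schedule ν I.P → Prop
  | [] => True
  | S :: rest => ssValid I c S ∧ schedValidFrom I (stepConfig c S) rest

/-- `B` is exactly the set of sources of the DAG. -/
def initB (I : Inst ν) (B : Finset ν) : Prop := ∀ v, v ∈ B ↔ isSource I v

/-- A valid MBSP schedule: starts with empty caches and the sources in slow memory,
every transition is legal and the memory bound holds throughout, and at the end
every sink is in slow memory. -/
def Valid (I : Inst ν) (sched : Schedule ν I.P) : Prop :=
  ∃ B0 : Finset ν, initB I B0 ∧
    schedValidFrom I ⟨fun _ => ∅, B0⟩ sched ∧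
    ∀ v, isSink I v → v ∈ (runSched (⟨fun _ => ∅, B0⟩ : Config ν I.P) sched).B

def listCost (I : Inst ν) (l : List (Op ν)) : ℝ := (l.map (opCost I)).sum

def ioCost (I : Inst ν) (l : List ν) : ℝ := (l.map (fun v => I.μ v * I.g)).sum

/-- The synchronous cost of a superstep. -/
noncomputable def ssCost (I : Inst ν) (S : Superstep ν I.P) : ℝ :=
  (⨆ p : Fin I.P, listCost I (S.comp p)) + (⨆ p : Fin I.P, ioCost I (S.save p)) +
    (⨆ p : Fin I.P, ioCost I (S.load p)) + I.L

/-- The synchronous cost of a schedule. -/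
noncomputable def syncCost (I : Inst ν) (sched : Schedule ν I.P) : ℝ :=
  (sched.map (ssCost I)).sum

/-- Finishing times of the saves in a save phase starting at time `t`. -/
def saveFinishes (I : Inst ν) : ℝ → List ν → List (ν × ℝ)
  | _, [] => []
  | t, v :: rest => (v, t + I.μ v * I.g) :: saveFinishes I (t + I.μ v * I.g) rest

def minSaveTime (entries : List (ν × ℝ)) (v : ν) : Option ℝ :=
  ((entries.filter (fun e => e.1 == v)).map Prod.snd).min?

/-- Finishing time of a load phase: each load waits for the value to be available
in slow memory (time `Γ v`). -/
def loadFold (I : Inst ν) (Γ : ν → Option ℝ) : ℝ → List ν → ℝ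
  | t, [] => t
  | t, v :: rest => loadFold I Γ (max t ((Γ v).getD 0) + I.μ v * I.g) rest

/-- One superstep of the asynchronous execution: updates the finishing time of
every processor and the availability times `Γ` of the values in slow memory. -/
def asyncSS (I : Inst ν) (S : Superstep ν I.P)
    (st : (Fin I.P → ℝ) × (ν → Option ℝ)) : (Fin I.P → ℝ) × (ν → Option ℝ) :=
  let t1 : Fin I.P → ℝ := fun p => st.1 p + listCost I (S.comp p)
  let entries : List (ν × ℝ) :=
    ((List.finRange I.P).map (fun p => saveFinishes I (t1 p) (S.save p))).flatten
  let Γ' : ν → Option ℝ := fun v => (st.2 v).orElse (fun _ => minSaveTime entries v)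
  let t2 : Fin I.P → ℝ := fun p => t1 p + ioCost I (S.save p)
  (fun p => loadFold I Γ' (t2 p) (S.load p), Γ')

def asyncRun (I : Inst ν) (st : (Fin I.P → ℝ) × (ν → Option ℝ)) :
    Schedule ν I.P → (Fin I.P → ℝ) × (ν → Option ℝ)
  | [] => st
  | S :: rest => asyncRun I (asyncSS I S st) rest

/-- The asynchronous cost (makespan) of a schedule. -/
noncomputable def asyncCost (I : Inst ν) (sched : Schedule ν I.P) : ℝ :=
  ⨆ p : Fin I.P, (asyncRun I (fun _ => (0 : ℝ), fun _ => none) sched).1 p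

end MBSP

namespace MBSP

variable {ν : Type} [DecidableEq ν]

/-- A valid single-processor schedule (red-blue pebbling with costs): a sequence of
transitions starting from an empty cache with exactly the sources in slow memory,
in which every precondition and the memory bound hold throughout, and which ends
with every sink in slow memory. -/
def ValidSeq (I : Inst ν) (l : List (Op ν)) : Prop :=
  ∃ B0 : Finset ν, initB I B0 ∧ memOK I ∅ ∧ seqValid I ∅ B0 l ∧
    ∀ v, isSink I v → v ∈ (run (∅ : Finset ν) B0 l).2

/-- Whether a transition is not a DELETE. -/
def nonDelete : Op ν → Bool
  | .delete _ => false
  | _ => true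

/-- Nodes of the construction `W(d,m)`: a source `w`, chains `u_1,…,u_d` and
`u'_1,…,u'_d` (index `j ∈ [d]` is `Fin`-value `j-1`) and a chain `v_0,…,v_m`. -/
inductive WNode (d m : ℕ) where
  | w : WNode d m
  | u : Fin d → WNode d m
  | u' : Fin d → WNode d m
  | v : Fin (m + 1) → WNode d m
deriving DecidableEq, Fintype

/-- Edges of `W(d,m)`: the three chains; `u_d, u'_d → v_0`; `u_d → v_i` for odd
`i ∈ [m]`; `u'_d → v_i` for even `i ∈ [m]`; and `w` to every other node. -/
def wEdge (d m : ℕ) : WNode d m → WNode d m → Prop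
  | .w, .w => False
  | .w, _ => True
  | .u j, .u j' => (j' : ℕ) = (j : ℕ) + 1
  | .u' j, .u' j' => (j' : ℕ) = (j : ℕ) + 1
  | .v i, .v i' => (i' : ℕ) = (i : ℕ) + 1
  | .u j, .v i => (j : ℕ) = d - 1 ∧ ((i : ℕ) = 0 ∨ Odd (i : ℕ))
  | .u' j, .v i => (j : ℕ) = d - 1 ∧ ((i : ℕ) = 0 ∨ ((i : ℕ) ≠ 0 ∧ Even (i : ℕ)))
  | _, _ => False

/-- The single-processor MBSP instance on `W(d,m)` with cache capacity `r = 4`,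
communication cost `g`, and unit compute and memory weights. -/
def wInst (d m : ℕ) (g : ℝ) : Inst (WNode d m) where
  edge := wEdge d m
  ω := fun _ => 1
  μ := fun _ => 1
  P := 1
  r := 4
  g := g
  L := 0

end MBSP

/-!
Build both chains once, saving `u_d` and `u'_d`, compute `v_0` and `v_1` while `u_d` and `u'_d`
are still in cache, and then walk along the `v`-chain keeping `w` and the current `v_i` in
cache, loading `u_d` or `u'_d` whenever the next `v_i` needs it. The only deviation from this
natural schedule is at `v_2`: instead of loading `u'_d` (cost `g`) the chain `u'_1, …, u'_d` is
recomputed (cost `d`, and `d - 1` extra non-DELETE transitions). At every moment the cache holds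
at most `w`, the node being replaced, the node replacing it and one chain end, so `r = 4`
suffices.
-/

namespace MBSP

section General

variable {ν : Type} {I : Inst ν}

theorem memOK_of_card_le (hμ : ∀ v, I.μ v = 1) {R : Finset ν} {n : ℕ} (hR : R.card ≤ n)
    (hn : (n : ℝ) ≤ I.r) : memOK I R := by
  simp only [memOK, hμ, Finset.sum_const, nsmul_eq_mul, mul_one]
  exact le_trans (by exact_mod_cast hR) hn

theorem listCost_append (l₁ l₂ : List (Op ν)) :
    listCost I (l₁ ++ l₂) = listCost I l₁ + listCost I l₂ := by
  simp [listCost]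

def chainOps (f : ℕ → ν) : ℕ → List (Op ν)
  | 0 => [.compute (f 0)]
  | n + 1 => chainOps f n ++ [.compute (f (n + 1)), .delete (f n)]

def relayOps (x f : ℕ → ν) : ℕ → List (Op ν)
  | 0 => []
  | n + 1 => relayOps x f n ++
      [.load (x (n + 1)), .compute (f (n + 1)), .delete (f n), .delete (x (n + 1))]

variable {f x : ℕ → ν}

theorem listCost_chainOps (hω : ∀ v, I.ω v = 1) (n : ℕ) :
    listCost I (chainOps f n) = n + 1 := by
  induction n with
  | zero => simp [chainOps, listCost, opCost, hω]
  | succ n ih =>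
    rw [chainOps, listCost_append, ih]
    simp [listCost, opCost, hω]

theorem listCost_relayOps (hω : ∀ v, I.ω v = 1) (hμ : ∀ v, I.μ v = 1) (n : ℕ) :
    listCost I (relayOps x f n) = n * (I.g + 1) := by
  induction n with
  | zero => simp [relayOps, listCost]
  | succ n ih =>
    rw [relayOps, listCost_append, ih]
    simp [listCost, opCost, hω, hμ]
    ring

theorem length_filter_nonDelete_chainOps (n : ℕ) :
    ((chainOps f n).filter nonDelete).length = n + 1 := by
  induction n with
  | zero => rfl
  | succ n ih => simp [chainOps, ih, List.filter_cons, nonDelete]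

theorem length_filter_nonDelete_relayOps (n : ℕ) :
    ((relayOps x f n).filter nonDelete).length = 2 * n := by
  induction n with
  | zero => rfl
  | succ n ih => simp [relayOps, ih, List.filter_cons, nonDelete]; ring

variable [DecidableEq ν]

def Reaches (I : Inst ν) (R B : Finset ν) (l : List (Op ν)) (R' B' : Finset ν) : Prop :=
  seqValid I R B l ∧ run R B l = (R', B')

namespace Reaches

variable {R B R₁ B₁ R₂ B₂ K : Finset ν} {v a b c : ν}

theorem append {l₁ l₂ : List (Op ν)} (h₁ : Reaches I R B l₁ R₁ B₁)
    (h₂ : Reaches I R₁ B₁ l₂ R₂ B₂) : Reaches I R B (l₁ ++ l₂) R₂ B₂ := by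
  induction l₁ generalizing R B with
  | nil =>
    obtain ⟨-, h⟩ := h₁
    cases h
    exact h₂
  | cons op l ih =>
    obtain ⟨hl, hrun⟩ := ih ⟨h₁.1.2.2, h₁.2⟩
    exact ⟨⟨h₁.1.1, h₁.1.2.1, hl⟩, hrun⟩

theorem load (hv : v ∈ B) (hm : memOK I (insert v R)) :
    Reaches I R B [.load v] (insert v R) B :=
  ⟨⟨hv, hm, trivial⟩, rfl⟩

theorem save (hv : v ∈ R) (hm : memOK I R) : Reaches I R B [.save v] R (insert v B) :=
  ⟨⟨hv, hm, trivial⟩, rfl⟩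

theorem compute (hv : ∃ u, I.edge u v) (hpar : ∀ u, I.edge u v → u ∈ R)
    (hm : memOK I (insert v R)) : Reaches I R B [.compute v] (insert v R) B :=
  ⟨⟨⟨hv, hpar⟩, hm, trivial⟩, rfl⟩

theorem delete_insert (hv : v ∉ R) (hm : memOK I R) :
    Reaches I (insert v R) B [.delete v] R B :=
  ⟨⟨trivial, by simpa [applyOp, Finset.erase_insert hv], trivial⟩,
    by simp [run, applyOp, Finset.erase_insert hv]⟩

theorem compute_delete (hμ : ∀ v, I.μ v = 1) (hK : (K.card : ℝ) + 2 ≤ I.r) (ha : a ∉ K)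
    (hab : a ≠ b) (hb : ∃ u, I.edge u b) (hpar : ∀ u, I.edge u b → u ∈ insert a K) :
    Reaches I (insert a K) B [.compute b, .delete a] (insert b K) B := by
  have hcard : (insert b (insert a K)).card ≤ K.card + 2 :=
    (Finset.card_insert_le _ _).trans (Nat.succ_le_succ (Finset.card_insert_le _ _))
  refine (compute hb hpar (memOK_of_card_le hμ hcard (by push_cast; exact hK))).append ?_
  rw [Finset.insert_comm]
  refine delete_insert (by simp [hab, ha]) (memOK_of_card_le hμ (Finset.card_insert_le _ _) ?_)
  push_cast
  linarith

theorem relay_step (hμ : ∀ v, I.μ v = 1) (hK : (K.card : ℝ) + 3 ≤ I.r) (hc : c ∈ B)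
    (haK : a ∉ K) (hcK : c ∉ K) (hab : a ≠ b) (hac : a ≠ c) (hbc : b ≠ c)
    (hb : ∃ u, I.edge u b) (hpar : ∀ u, I.edge u b → u ∈ insert c (insert a K)) :
    Reaches I (insert a K) B [.load c, .compute b, .delete a, .delete c] (insert b K) B := by
  have hcard : (insert c (insert a K)).card ≤ K.card + 2 :=
    (Finset.card_insert_le _ _).trans (Nat.succ_le_succ (Finset.card_insert_le _ _))
  refine (load hc (memOK_of_card_le hμ hcard (by push_cast; linarith))).append ?_
  rw [Finset.insert_comm]
  refine (compute_delete (K := insert c K) hμ ?_ (by simp [hac, haK]) hab hb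
    (by simpa only [Finset.insert_comm] using hpar)).append ?_
  · grw [Finset.card_insert_le]
    push_cast
    linarith
  rw [Finset.insert_comm]
  exact delete_insert (by simp [hbc.symm, hcK])
    (memOK_of_card_le hμ (Finset.card_insert_le _ _) (by push_cast; linarith))

end Reaches

variable {K B : Finset ν} {n : ℕ}

theorem reaches_chainOps (hμ : ∀ v, I.μ v = 1) (hK : (K.card : ℝ) + 2 ≤ I.r)
    (hfK : ∀ k ≤ n, f k ∉ K) (hf : ∀ k < n, f k ≠ f (k + 1))
    (hsrc : ∀ k ≤ n, ∃ u, I.edge u (f k)) (hpar₀ : ∀ u, I.edge u (f 0) → u ∈ K)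
    (hpar : ∀ k < n, ∀ u, I.edge u (f (k + 1)) → u ∈ insert (f k) K) :
    Reaches I K B (chainOps f n) (insert (f n) K) B := by
  induction n with
  | zero =>
    refine Reaches.compute (hsrc 0 le_rfl) hpar₀
      (memOK_of_card_le hμ (Finset.card_insert_le _ _) ?_)
    push_cast
    linarith
  | succ n ih =>
    exact (ih (fun k hk => hfK k (by omega)) (fun k hk => hf k (by omega))
      (fun k hk => hsrc k (by omega)) (fun k hk => hpar k (by omega))).append
      (Reaches.compute_delete hμ hK (hfK n (by omega)) (hf n (by omega)) (hsrc _ le_rfl)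
        (hpar n (by omega)))

theorem reaches_relayOps (hμ : ∀ v, I.μ v = 1) (hK : (K.card : ℝ) + 3 ≤ I.r)
    (hxB : ∀ k < n, x (k + 1) ∈ B) (hfK : ∀ k < n, f k ∉ K) (hxK : ∀ k < n, x (k + 1) ∉ K)
    (hf : ∀ k < n, f k ≠ f (k + 1)) (hfx : ∀ k < n, f k ≠ x (k + 1))
    (hfx' : ∀ k < n, f (k + 1) ≠ x (k + 1)) (hsrc : ∀ k < n, ∃ u, I.edge u (f (k + 1)))
    (hpar : ∀ k < n, ∀ u, I.edge u (f (k + 1)) → u ∈ insert (x (k + 1)) (insert (f k) K)) :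
    Reaches I (insert (f 0) K) B (relayOps x f n) (insert (f n) K) B := by
  induction n with
  | zero => exact ⟨trivial, rfl⟩
  | succ n ih =>
    exact (ih (fun k hk => hxB k (by omega)) (fun k hk => hfK k (by omega))
      (fun k hk => hxK k (by omega)) (fun k hk => hf k (by omega))
      (fun k hk => hfx k (by omega)) (fun k hk => hfx' k (by omega))
      (fun k hk => hsrc k (by omega)) (fun k hk => hpar k (by omega))).append
      (Reaches.relay_step hμ hK (hxB n (by omega)) (hfK n (by omega)) (hxK n (by omega))
        (hf n (by omega)) (hfx n (by omega)) (hfx' n (by omega)) (hsrc n (by omega))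
        (hpar n (by omega)))

end General

namespace WNode

variable {d m : ℕ}

def uAt (j : ℕ) : WNode d m := if h : j < d then u ⟨j, h⟩ else w

def u'At (j : ℕ) : WNode d m := if h : j < d then u' ⟨j, h⟩ else w

def vAt (i : ℕ) : WNode d m := if h : i < m + 1 then v ⟨i, h⟩ else w

/-- The parent of `v_i` besides `w` and `v_{i-1}`. -/
def feeder (i : ℕ) : WNode d m := if Odd i then uAt (d - 1) else u'At (d - 1)

theorem uAt_of_lt {j : ℕ} (h : j < d) : (uAt j : WNode d m) = u ⟨j, h⟩ := dif_pos h

theorem u'At_of_lt {j : ℕ} (h : j < d) : (u'At j : WNode d m) = u' ⟨j, h⟩ := dif_pos h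

theorem vAt_of_le {i : ℕ} (h : i ≤ m) : (vAt i : WNode d m) = v ⟨i, Nat.lt_succ_of_le h⟩ :=
  dif_pos _

end WNode

open WNode

variable {d m : ℕ} {g : ℝ}

theorem wEdge_w_of_ne {a : WNode d m} (ha : a ≠ w) : wEdge d m w a := by
  cases a <;> first | exact absurd rfl ha | trivial

theorem wEdge_uAt_zero {a : WNode d m} (h : 0 < d) (ha : wEdge d m a (uAt 0)) : a = w := by
  simp only [uAt, h, dite_true] at ha
  cases a <;> simp_all [wEdge]

theorem wEdge_uAt_succ {a : WNode d m} {j : ℕ} (h : j + 1 < d)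
    (ha : wEdge d m a (uAt (j + 1))) : a = w ∨ a = uAt j := by
  simp only [uAt, h, dite_true, show j < d by omega] at ha ⊢
  cases a <;> simp_all [wEdge]

theorem wEdge_u'At_zero {a : WNode d m} (h : 0 < d) (ha : wEdge d m a (u'At 0)) : a = w := by
  simp only [u'At, h, dite_true] at ha
  cases a <;> simp_all [wEdge]

theorem wEdge_u'At_succ {a : WNode d m} {j : ℕ} (h : j + 1 < d)
    (ha : wEdge d m a (u'At (j + 1))) : a = w ∨ a = u'At j := by
  simp only [u'At, h, dite_true, show j < d by omega] at ha ⊢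
  cases a <;> simp_all [wEdge]

theorem wEdge_vAt_zero {a : WNode d m} (hd : 0 < d) (ha : wEdge d m a (vAt 0)) :
    a = w ∨ a = uAt (d - 1) ∨ a = u'At (d - 1) := by
  simp only [vAt, uAt, u'At, Nat.zero_lt_succ, dite_true, show d - 1 < d by omega] at ha ⊢
  cases a with
  | w => exact .inl rfl
  | u j => exact .inr (.inl (congrArg u (Fin.ext ha.1)))
  | u' j => exact .inr (.inr (congrArg u' (Fin.ext ha.1)))
  | v i => simp [wEdge] at ha

theorem wEdge_vAt_succ {a : WNode d m} {i : ℕ} (hd : 0 < d) (h : i + 1 ≤ m)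
    (ha : wEdge d m a (vAt (i + 1))) : a = w ∨ a = vAt i ∨ a = feeder (i + 1) := by
  simp only [vAt, feeder, uAt, u'At, show i + 1 < m + 1 by omega, show i < m + 1 by omega,
    show d - 1 < d by omega, dite_true] at ha ⊢
  cases a with
  | w => exact .inl rfl
  | u j =>
    obtain ⟨hj, hi⟩ := ha
    have hodd : Odd (i + 1) := hi.resolve_left (by simp)
    simp [hodd, Fin.ext_iff, hj]
  | u' j =>
    obtain ⟨hj, hi⟩ := ha
    have hodd : ¬ Odd (i + 1) := Nat.not_odd_iff_even.mpr (hi.resolve_left (by simp)).2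
    simp [hodd, Fin.ext_iff, hj]
  | v k => exact .inr (.inl (by simp only [wEdge] at ha; simp [Fin.ext_iff]; omega))

theorem isSource_wInst_iff {a : WNode d m} : isSource (wInst d m g) a ↔ a = w := by
  refine ⟨fun h => by_contra fun ha => h ⟨w, wEdge_w_of_ne ha⟩, ?_⟩
  rintro rfl ⟨b, hb⟩
  cases b <;> exact hb

theorem eq_vAt_of_isSink {a : WNode d m} (hd : 0 < d) (ha : isSink (wInst d m g) a) :
    a = vAt m := by
  simp only [isSink, wInst, not_exists] at ha
  cases a with
  | w => exact absurd trivial (ha (u ⟨0, hd⟩))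
  | u j =>
    by_cases hj : (j : ℕ) + 1 < d
    · exact absurd rfl (ha (u ⟨j + 1, hj⟩))
    · exact absurd ⟨by omega, .inl rfl⟩ (ha (v 0))
  | u' j =>
    by_cases hj : (j : ℕ) + 1 < d
    · exact absurd rfl (ha (u' ⟨j + 1, hj⟩))
    · exact absurd ⟨by omega, .inl rfl⟩ (ha (v 0))
  | v i =>
    by_cases hi : (i : ℕ) < m
    · exact absurd rfl (ha (v ⟨i + 1, by omega⟩))
    · simp [vAt, Fin.ext_iff]
      omega

theorem reaches_uChain {K B : Finset (WNode d m)} (hd : 0 < d) (hwK : w ∈ K) (hK : K.card ≤ 2)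
    (huK : ∀ k < d, uAt k ∉ K) :
    Reaches (wInst d m g) K B (chainOps uAt (d - 1)) (insert (uAt (d - 1)) K) B := by
  refine reaches_chainOps (fun _ => rfl) (by show (K.card : ℝ) + 2 ≤ 4; norm_cast; omega)
    (fun k hk => huK k (by omega)) (fun k hk => ?_) (fun k hk => ⟨w, wEdge_w_of_ne ?_⟩)
    (fun a ha => wEdge_uAt_zero hd ha ▸ hwK) (fun k hk a ha => ?_)
  · simp [uAt_of_lt (show k < d by omega), uAt_of_lt (show k + 1 < d by omega)]
  · simp [uAt_of_lt (show k < d by omega)]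
  · rcases wEdge_uAt_succ (by omega) ha with rfl | rfl <;> simp [hwK]

theorem reaches_u'Chain {K B : Finset (WNode d m)} (hd : 0 < d) (hwK : w ∈ K)
    (hK : K.card ≤ 2) (huK : ∀ k < d, u'At k ∉ K) :
    Reaches (wInst d m g) K B (chainOps u'At (d - 1)) (insert (u'At (d - 1)) K) B := by
  refine reaches_chainOps (fun _ => rfl) (by show (K.card : ℝ) + 2 ≤ 4; norm_cast; omega)
    (fun k hk => huK k (by omega)) (fun k hk => ?_) (fun k hk => ⟨w, wEdge_w_of_ne ?_⟩)
    (fun a ha => wEdge_u'At_zero hd ha ▸ hwK) (fun k hk a ha => ?_)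
  · simp [u'At_of_lt (show k < d by omega), u'At_of_lt (show k + 1 < d by omega)]
  · simp [u'At_of_lt (show k < d by omega)]
  · rcases wEdge_u'At_succ (by omega) ha with rfl | rfl <;> simp [hwK]

theorem reaches_vRelay {B : Finset (WNode d m)} (hd : 0 < d) (hm : 2 ≤ m)
    (hUB : uAt (d - 1) ∈ B) (hU'B : u'At (d - 1) ∈ B) :
    Reaches (wInst d m g) (insert (vAt 2) {w}) B
      (relayOps (fun k => feeder (k + 2)) (fun k => vAt (k + 2)) (m - 2))
      (insert (vAt m) {w}) B := by
  have hv : ∀ i ≤ m, vAt i ≠ (w : WNode d m) := fun i hi => by simp [vAt_of_le hi]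
  have hfeeder : ∀ i, feeder i ∈ B ∧ feeder i ≠ (w : WNode d m) ∧
      ∀ i' ≤ m, feeder i ≠ (vAt i' : WNode d m) := by
    intro i
    unfold feeder
    split_ifs
    · exact ⟨hUB, by simp [uAt_of_lt (show d - 1 < d by omega)],
        fun i' hi' => by simp [uAt_of_lt (show d - 1 < d by omega), vAt_of_le hi']⟩
    · exact ⟨hU'B, by simp [u'At_of_lt (show d - 1 < d by omega)],
        fun i' hi' => by simp [u'At_of_lt (show d - 1 < d by omega), vAt_of_le hi']⟩
  have h := reaches_relayOps (I := wInst d m g) (x := fun k => feeder (k + 2))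
    (f := fun k => vAt (k + 2)) (K := {w}) (B := B) (n := m - 2) (fun _ => rfl)
    (by norm_num [wInst]) (fun k _ => (hfeeder _).1)
    (fun k hk => by simpa using hv _ (by omega)) (fun k _ => by simpa using (hfeeder _).2.1)
    (fun k hk => by
      simp [vAt_of_le (show k + 2 ≤ m by omega), vAt_of_le (show k + 3 ≤ m by omega)])
    (fun k hk => ((hfeeder _).2.2 _ (by omega)).symm)
    (fun k hk => ((hfeeder _).2.2 _ (by omega)).symm)
    (fun k hk => ⟨w, wEdge_w_of_ne (hv _ (by omega))⟩)
    (fun k hk a ha => by rcases wEdge_vAt_succ hd (by omega) ha with rfl | rfl | rfl <;> simp)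
  simpa [show m - 2 + 2 = m by omega] using h

def chainsPhase (d m : ℕ) : List (Op (WNode d m)) :=
  [.load w] ++ chainOps uAt (d - 1) ++ [.save (uAt (d - 1))] ++ chainOps u'At (d - 1) ++
    [.save (u'At (d - 1))]

def junctionPhase (d m : ℕ) : List (Op (WNode d m)) :=
  [.compute (vAt 0), .delete (u'At (d - 1))] ++ [.compute (vAt 1), .delete (vAt 0)] ++
    [.delete (uAt (d - 1))] ++ chainOps u'At (d - 1) ++ [.compute (vAt 2), .delete (vAt 1)] ++
    [.delete (u'At (d - 1))]

def improvedSchedule (d m : ℕ) : List (Op (WNode d m)) :=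
  chainsPhase d m ++ junctionPhase d m ++
    relayOps (fun k => feeder (k + 2)) (fun k => vAt (k + 2)) (m - 2) ++ [.save (vAt m)]

theorem reaches_chainsPhase (hd : 0 < d) :
    Reaches (wInst d m g) ∅ {w} (chainsPhase d m)
      (insert (u'At (d - 1)) (insert (uAt (d - 1)) {w}))
      (insert (u'At (d - 1)) (insert (uAt (d - 1)) {w})) := by
  have hμ : ∀ a : WNode d m, (wInst d m g).μ a = 1 := fun _ => rfl
  have hU : uAt (d - 1) = (u ⟨d - 1, by omega⟩ : WNode d m) := uAt_of_lt (by omega)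
  have loadW : Reaches (wInst d m g) ∅ {w} [.load w] {w} {w} := by
    simpa using Reaches.load (I := wInst d m g) (R := ∅) (B := {w}) (v := w) (by simp)
      (memOK_of_card_le hμ (n := 1) (by simp) (by norm_num [wInst]))
  have uChain : Reaches (wInst d m g) {w} {w} (chainOps uAt (d - 1)) (insert (uAt (d - 1)) {w})
      {w} :=
    reaches_uChain hd (by simp) (by simp) fun k hk => by simp [uAt_of_lt hk]
  have saveU : Reaches (wInst d m g) (insert (uAt (d - 1)) {w}) {w} [.save (uAt (d - 1))]
      (insert (uAt (d - 1)) {w}) (insert (uAt (d - 1)) {w}) :=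
    Reaches.save (by simp) (memOK_of_card_le hμ Finset.card_le_two (by norm_num [wInst]))
  have u'Chain : Reaches (wInst d m g) (insert (uAt (d - 1)) {w}) (insert (uAt (d - 1)) {w})
      (chainOps u'At (d - 1)) (insert (u'At (d - 1)) (insert (uAt (d - 1)) {w}))
      (insert (uAt (d - 1)) {w}) :=
    reaches_u'Chain hd (by simp) Finset.card_le_two fun k hk => by simp [hU, u'At_of_lt hk]
  have saveU' := Reaches.save (I := wInst d m g) (B := insert (uAt (d - 1)) {w})
    (R := insert (u'At (d - 1)) (insert (uAt (d - 1)) {w})) (v := u'At (d - 1)) (by simp)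
    (memOK_of_card_le hμ Finset.card_le_three (by norm_num [wInst]))
  exact (((loadW.append uChain).append saveU).append u'Chain).append saveU'

theorem reaches_junctionPhase (hd : 0 < d) (hm : 2 ≤ m) {B : Finset (WNode d m)} :
    Reaches (wInst d m g) (insert (u'At (d - 1)) (insert (uAt (d - 1)) {w})) B
      (junctionPhase d m) (insert (vAt 2) {w}) B := by
  have hμ : ∀ a : WNode d m, (wInst d m g).μ a = 1 := fun _ => rfl
  have hr : ((2 : ℕ) : ℝ) + 2 ≤ (wInst d m g).r := by norm_num [wInst]
  have hU : uAt (d - 1) = (u ⟨d - 1, by omega⟩ : WNode d m) := uAt_of_lt (by omega)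
  have hU' : u'At (d - 1) = (u' ⟨d - 1, by omega⟩ : WNode d m) := u'At_of_lt (by omega)
  have hsrc : ∀ i ≤ m, ∃ a, wEdge d m a (vAt i) := fun i hi =>
    ⟨w, wEdge_w_of_ne (by simp [vAt_of_le hi])⟩
  have s₁ : Reaches (wInst d m g) (insert (u'At (d - 1)) (insert (uAt (d - 1)) {w})) B
      [.compute (vAt 0), .delete (u'At (d - 1))] (insert (vAt 0) (insert (uAt (d - 1)) {w})) B :=
    Reaches.compute_delete hμ (hr.trans' (by gcongr; exact Finset.card_le_two))
      (by simp [hU, hU']) (by simp [hU', vAt_of_le (show 0 ≤ m by omega)]) (hsrc 0 (by omega))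
      fun a ha => by rcases wEdge_vAt_zero hd ha with rfl | rfl | rfl <;> simp
  have s₂ : Reaches (wInst d m g) (insert (vAt 0) (insert (uAt (d - 1)) {w})) B
      [.compute (vAt 1), .delete (vAt 0)] (insert (vAt 1) (insert (uAt (d - 1)) {w})) B :=
    Reaches.compute_delete hμ (hr.trans' (by gcongr; exact Finset.card_le_two))
      (by simp [hU, vAt_of_le (show 0 ≤ m by omega)])
      (by simp [vAt_of_le (show 0 ≤ m by omega), vAt_of_le (show 1 ≤ m by omega)])
      (hsrc 1 (by omega)) fun a ha => by
        rcases wEdge_vAt_succ hd (by omega) ha with rfl | rfl | rfl <;> simp [feeder]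
  have s₃ : Reaches (wInst d m g) (insert (vAt 1) (insert (uAt (d - 1)) {w})) B
      [.delete (uAt (d - 1))] (insert (vAt 1) {w}) B := by
    rw [Finset.insert_comm]
    exact Reaches.delete_insert (by simp [hU, vAt_of_le (show 1 ≤ m by omega)])
      (memOK_of_card_le hμ Finset.card_le_two (by norm_num [wInst]))
  have s₄ : Reaches (wInst d m g) (insert (vAt 1) {w}) B
      (chainOps u'At (d - 1)) (insert (u'At (d - 1)) (insert (vAt 1) {w})) B :=
    reaches_u'Chain hd (by simp) Finset.card_le_two fun k hk => by
      simp [u'At_of_lt hk, vAt_of_le (show 1 ≤ m by omega)]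
  have s₅ : Reaches (wInst d m g) (insert (u'At (d - 1)) (insert (vAt 1) {w})) B
      [.compute (vAt 2), .delete (vAt 1)] (insert (u'At (d - 1)) (insert (vAt 2) {w})) B := by
    rw [Finset.insert_comm, Finset.insert_comm (u'At (d - 1))]
    exact Reaches.compute_delete hμ (hr.trans' (by gcongr; exact Finset.card_le_two))
      (by simp [hU', vAt_of_le (show 1 ≤ m by omega)])
      (by simp [vAt_of_le (show 1 ≤ m by omega), vAt_of_le hm]) (hsrc 2 hm) fun a ha => by
        rcases wEdge_vAt_succ hd (by omega) ha with rfl | rfl | rfl <;> simp [feeder]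
  have s₆ : Reaches (wInst d m g) (insert (u'At (d - 1)) (insert (vAt 2) {w})) B
      [.delete (u'At (d - 1))] (insert (vAt 2) {w}) B :=
    Reaches.delete_insert (by simp [hU', vAt_of_le hm])
      (memOK_of_card_le hμ Finset.card_le_two (by norm_num [wInst]))
  exact ((((s₁.append s₂).append s₃).append s₄).append s₅).append s₆

theorem reaches_improvedSchedule (hd : 0 < d) (hm : 2 ≤ m) :
    Reaches (wInst d m g) ∅ {w} (improvedSchedule d m) (insert (vAt m) {w})
      (insert (vAt m) (insert (u'At (d - 1)) (insert (uAt (d - 1)) {w}))) :=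
  (((reaches_chainsPhase hd).append (reaches_junctionPhase hd hm)).append
    (reaches_vRelay hd hm (by simp) (by simp))).append
    (Reaches.save (by simp) (memOK_of_card_le (fun _ => rfl) Finset.card_le_two
      (by norm_num [wInst])))

theorem listCost_improvedSchedule (hd : 0 < d) (hm : 2 ≤ m) :
    listCost (wInst d m g) (improvedSchedule d m) = (3 * d + m + 1) + (m + 2) * g := by
  have hω : ∀ a : WNode d m, (wInst d m g).ω a = 1 := fun _ => rfl
  have hμ : ∀ a : WNode d m, (wInst d m g).μ a = 1 := fun _ => rfl
  simp only [improvedSchedule, chainsPhase, junctionPhase, listCost_append,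
    listCost_chainOps hω, listCost_relayOps hω hμ]
  simp [listCost, opCost, wInst, Nat.cast_sub (show 1 ≤ d by omega),
    Nat.cast_sub (show 2 ≤ m by omega)]
  ring

theorem length_filter_nonDelete_improvedSchedule (hd : 0 < d) (hm : 2 ≤ m) :
    ((improvedSchedule d m).filter nonDelete).length = 3 * d + 2 * m + 3 := by
  simp [improvedSchedule, chainsPhase, junctionPhase, length_filter_nonDelete_chainOps,
    length_filter_nonDelete_relayOps, List.filter_cons, nonDelete]
  omega

theorem statement_11_general (d m : ℕ) (hd : 3 ≤ d) (hm : 3 ≤ m) (g : ℝ) :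
    (∃ l : List (Op (WNode d m)), ValidSeq (wInst d m g) l ∧
      (l.filter nonDelete).length = 2 * m + 2 * d + 4 + d - 1 ∧
      listCost (wInst d m g) l =
        ((2 * (d : ℝ) + (m : ℝ) + 1) + ((m : ℝ) + 3) * g) - (g - (d : ℝ)) ∧
      listCost (wInst d m g) l = (3 * (d : ℝ) + (m : ℝ) + 1) + ((m : ℝ) + 2) * g) ∧
    ((d : ℝ) < g →
      (3 * (d : ℝ) + (m : ℝ) + 1) + ((m : ℝ) + 2) * g <
        (2 * (d : ℝ) + (m : ℝ) + 1) + ((m : ℝ) + 3) * g) := by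
  have hcost := listCost_improvedSchedule (g := g) (show 0 < d by omega) (show 2 ≤ m by omega)
  refine ⟨⟨improvedSchedule d m, ?_, ?_, by rw [hcost]; ring, hcost⟩, fun _ => by linarith⟩
  · obtain ⟨hvalid, hrun⟩ := reaches_improvedSchedule (g := g) (show 0 < d by omega)
      (show 2 ≤ m by omega)
    refine ⟨{w}, fun a => by simp [isSource_wInst_iff], by simp [memOK, wInst], hvalid,
      fun a ha => ?_⟩
    rw [hrun, eq_vAt_of_isSink (by omega) ha]
    simp
  · rw [length_filter_nonDelete_improvedSchedule (by omega) (by omega)]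
    omega

/-- On `W(d,m)` (`d, m ≥ 3`) with one processor, `r = 4` and
`g ≥ d`, with `s = 2m + 2d + 4` and `C₀ = (2d + m + 1) + (m + 3)·g`: some valid
schedule with exactly `s + d − 1` non-DELETE transitions has total cost
`C₀ − (g − d) = (3d + m + 1) + (m + 2)·g`; in particular, if `g > d` this cost is
strictly smaller than `C₀`. -/
theorem statement_11 (d m : ℕ) (hd : 3 ≤ d) (hm : 3 ≤ m) (g : ℝ) (hg : (d : ℝ) ≤ g) :
    (∃ l : List (Op (WNode d m)), ValidSeq (wInst d m g) l ∧
      (l.filter nonDelete).length = 2 * m + 2 * d + 4 + d - 1 ∧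
      listCost (wInst d m g) l =
        ((2 * (d : ℝ) + (m : ℝ) + 1) + ((m : ℝ) + 3) * g) - (g - (d : ℝ)) ∧
      listCost (wInst d m g) l = (3 * (d : ℝ) + (m : ℝ) + 1) + ((m : ℝ) + 2) * g) ∧
    ((d : ℝ) < g →
      (3 * (d : ℝ) + (m : ℝ) + 1) + ((m : ℝ) + 2) * g <
        (2 * (d : ℝ) + (m : ℝ) + 1) + ((m : ℝ) + 3) * g) :=
  statement_11_general d m hd hm g

end MBSP
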